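/- There exist constants c > 0 and m₀ ∈ ℕ such that for every integer m ≥ m₀ and every ζ = θ + iσ ∈ ℂ with θ ∈ [−π/2, 5π/2], |θ − w| ≥ 2·3^{−40m} for all w ∈ W, and |σ| ≤ 3^{−100m}, one has: for every z ∈ ℂ with Re z ∈ [−3^m − 1, 3^m + 1] and Im z ∈ [−3/2, 3/2], writing Z := √3·z, max( | |e^{iZ·b(ζ)}| · |a(ζ)+b(ζ)| / |a(ζ)| − 1 | , | |e^{−iZ·a(ζ)}| · |a(ζ)+b(ζ)| / |b(ζ)| − 1 | ) ≥ (c/2)·3^{−40m}. -/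

import Mathlib

set_option maxHeartbeats 1000000


noncomputable def aC (ζ : ℂ) : ℂ := Complex.sin (ζ - Real.pi / 6)
noncomputable def bC (ζ : ℂ) : ℂ := Complex.sin (ζ - 5 * Real.pi / 6)

/-- The exceptional set `W = {kπ + π/6, kπ + π/2, kπ + 5π/6 : k ∈ ℤ}`. -/
def Wset : Set ℝ :=
  {w : ℝ | ∃ k : ℤ, w = k * Real.pi + Real.pi / 6 ∨ w = k * Real.pi + Real.pi / 2 ∨
    w = k * Real.pi + 5 * Real.pi / 6}

section helpers

lemma ent_pair (p q : ℝ) (hp : 0 < p) (hq : 0 < q) :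
    Real.log 2 * min p q ≤ (p+q) * Real.log (p+q) - p * Real.log p - q * Real.log q := by
  rcases le_total p q with h | h
  · rw [min_eq_left h]
    have h1 : Real.log (2*p) ≤ Real.log (p+q) := Real.log_le_log (by positivity) (by linarith)
    have h2 : Real.log q ≤ Real.log (p+q) := Real.log_le_log hq (by linarith)
    have h3 : Real.log (2*p) = Real.log 2 + Real.log p := Real.log_mul (by norm_num) (ne_of_gt hp)
    nlinarith
  · rw [min_eq_right h]
    have h1 : Real.log (2*q) ≤ Real.log (p+q) := Real.log_le_log (by positivity) (by linarith)
    have h2 : Real.log p ≤ Real.log (p+q) := Real.log_le_log hp (by linarith)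
    have h3 : Real.log (2*q) = Real.log 2 + Real.log q := Real.log_mul (by norm_num) (ne_of_gt hq)
    nlinarith

lemma case_core (p q : ℝ) (hp : 0 < p) (hq : 0 < q) :
    Real.log 2 * min p q ≤ abs (p * Real.log p + q * Real.log q - (p+q) * Real.log (p+q)) := by
  have h0 : (0:ℝ) < Real.log 2 := Real.log_pos (by norm_num)
  have hmin : 0 < min p q := lt_min hp hq
  have hE := ent_pair p q hp hq
  rw [abs_of_nonpos (by nlinarith)]
  nlinarith

lemma ent_three {a b c : ℝ} (h : a + b + c = 0) (ha : a ≠ 0) (hb : b ≠ 0) (hc : c ≠ 0) :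
    Real.log 2 * min (abs a) (min (abs b) (abs c)) ≤
      abs (a * Real.log (abs a) + b * Real.log (abs b) + c * Real.log (abs c)) := by
  have h0 : (0:ℝ) < Real.log 2 := Real.log_pos (by norm_num)
  rcases ha.lt_or_gt with ha' | ha' <;> rcases hb.lt_or_gt with hb' | hb' <;>
    rcases hc.lt_or_gt with hc' | hc'
  · linarith
  · have hm : min (abs a) (min (abs b) (abs c)) ≤ min (-a) (-b) := by
      rw [abs_of_neg ha', abs_of_neg hb']; exact min_le_min le_rfl (min_le_left _ _)
    have e1 : a * Real.log (abs a) + b * Real.log (abs b) + c * Real.log (abs c)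
        = -((-a) * Real.log (-a) + (-b) * Real.log (-b) - ((-a) + (-b)) * Real.log ((-a) + (-b))) := by
      rw [abs_of_neg ha', abs_of_neg hb', abs_of_pos hc', show c = -a + -b by linarith]
      ring
    calc Real.log 2 * min (abs a) (min (abs b) (abs c)) ≤ Real.log 2 * min (-a) (-b) :=
          mul_le_mul_of_nonneg_left hm h0.le
      _ ≤ _ := by rw [e1, abs_neg]; exact case_core _ _ (by linarith) (by linarith)
  · have hm : min (abs a) (min (abs b) (abs c)) ≤ min (-a) (-c) := by
      rw [abs_of_neg ha', abs_of_neg hc']; exact min_le_min le_rfl (min_le_right _ _)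
    have e1 : a * Real.log (abs a) + b * Real.log (abs b) + c * Real.log (abs c)
        = -((-a) * Real.log (-a) + (-c) * Real.log (-c) - ((-a) + (-c)) * Real.log ((-a) + (-c))) := by
      rw [abs_of_neg ha', abs_of_neg hc', abs_of_pos hb', show b = -a + -c by linarith]
      ring
    calc Real.log 2 * min (abs a) (min (abs b) (abs c)) ≤ Real.log 2 * min (-a) (-c) :=
          mul_le_mul_of_nonneg_left hm h0.le
      _ ≤ _ := by rw [e1, abs_neg]; exact case_core _ _ (by linarith) (by linarith)
  · have hm : min (abs a) (min (abs b) (abs c)) ≤ min b c := by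
      rw [abs_of_pos hb', abs_of_pos hc']; exact min_le_right _ _
    have e1 : a * Real.log (abs a) + b * Real.log (abs b) + c * Real.log (abs c)
        = b * Real.log b + c * Real.log c - (b + c) * Real.log (b + c) := by
      rw [abs_of_neg ha', abs_of_pos hb', abs_of_pos hc', show a = -(b + c) by linarith]
      ring_nf
    calc Real.log 2 * min (abs a) (min (abs b) (abs c)) ≤ Real.log 2 * min b c :=
          mul_le_mul_of_nonneg_left hm h0.le
      _ ≤ _ := by rw [e1]; exact case_core _ _ hb' hc'
  · have hm : min (abs a) (min (abs b) (abs c)) ≤ min (-b) (-c) := by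
      rw [abs_of_neg hb', abs_of_neg hc']; exact min_le_right _ _
    have e1 : a * Real.log (abs a) + b * Real.log (abs b) + c * Real.log (abs c)
        = -((-b) * Real.log (-b) + (-c) * Real.log (-c) - ((-b) + (-c)) * Real.log ((-b) + (-c))) := by
      rw [abs_of_neg hb', abs_of_neg hc', abs_of_pos ha', show a = -b + -c by linarith]
      ring
    calc Real.log 2 * min (abs a) (min (abs b) (abs c)) ≤ Real.log 2 * min (-b) (-c) :=
          mul_le_mul_of_nonneg_left hm h0.le
      _ ≤ _ := by rw [e1, abs_neg]; exact case_core _ _ (by linarith) (by linarith)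
  · have hm : min (abs a) (min (abs b) (abs c)) ≤ min a c := by
      rw [abs_of_pos ha', abs_of_pos hc']
      exact le_min (min_le_left _ _) ((min_le_right _ _).trans (min_le_right _ _))
    have e1 : a * Real.log (abs a) + b * Real.log (abs b) + c * Real.log (abs c)
        = a * Real.log a + c * Real.log c - (a + c) * Real.log (a + c) := by
      rw [abs_of_pos ha', abs_of_pos hc', abs_of_neg hb', show b = -(a + c) by linarith]
      ring_nf
    calc Real.log 2 * min (abs a) (min (abs b) (abs c)) ≤ Real.log 2 * min a c :=
          mul_le_mul_of_nonneg_left hm h0.le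
      _ ≤ _ := by rw [e1]; exact case_core _ _ ha' hc'
  · have hm : min (abs a) (min (abs b) (abs c)) ≤ min a b := by
      rw [abs_of_pos ha', abs_of_pos hb']
      exact le_min (min_le_left _ _) ((min_le_right _ _).trans (min_le_left _ _))
    have e1 : a * Real.log (abs a) + b * Real.log (abs b) + c * Real.log (abs c)
        = a * Real.log a + b * Real.log b - (a + b) * Real.log (a + b) := by
      rw [abs_of_pos ha', abs_of_pos hb', abs_of_neg hc', show c = -(a + b) by linarith]
      ring_nf
    calc Real.log 2 * min (abs a) (min (abs b) (abs c)) ≤ Real.log 2 * min a b :=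
          mul_le_mul_of_nonneg_left hm h0.le
      _ ≤ _ := by rw [e1]; exact case_core _ _ ha' hb'
  · linarith

lemma log_close {x : ℝ} (h1 : 1/2 ≤ x) (h2 : x ≤ 3/2) : |Real.log x| ≤ 2 * |x - 1| := by
  rcases le_total 1 x with h | h
  · rw [abs_of_nonneg (Real.log_nonneg h), abs_of_nonneg (by linarith)]
    have := Real.log_le_sub_one_of_pos (by linarith : (0:ℝ) < x)
    linarith
  · rw [abs_of_nonpos (Real.log_nonpos (by linarith) h), abs_of_nonpos (by linarith)]
    have hx : (0:ℝ) < x := by linarith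
    have hle := Real.log_le_sub_one_of_pos (by positivity : (0:ℝ) < x⁻¹)
    have hlog : Real.log x⁻¹ = - Real.log x := Real.log_inv x
    have h5 : -Real.log x ≤ x⁻¹ - 1 := by rw [← hlog]; exact hle
    have hinv : x⁻¹ - 1 = (1-x)/x := by field_simp
    rw [hinv] at h5
    have h6 : (1-x)/x ≤ 2*(1-x) := by
      rw [div_le_iff₀ hx]; nlinarith
    linarith

lemma jordan (t : ℝ) : ∃ k : ℤ, 2/Real.pi * |t - k * Real.pi| ≤ |Real.sin t| := by
  refine ⟨round (t / Real.pi), ?_⟩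
  have hpi := Real.pi_pos
  set k := round (t / Real.pi) with hk
  set r := t - k * Real.pi with hr
  have h1 : |t / Real.pi - k| ≤ 1/2 := abs_sub_round _
  have h2 : |r| ≤ Real.pi / 2 := by
    have he : t / Real.pi - k = r / Real.pi := by
      field_simp [hr]; ring
    rw [he, abs_div, abs_of_pos hpi] at h1
    rw [div_le_iff₀ hpi] at h1
    linarith
  have h3 : Real.sin t = (-1)^k * Real.sin r := by
    have : t = r + k * Real.pi := by ring
    rw [this, Real.sin_add_int_mul_pi]
  have h4 : |Real.sin t| = |Real.sin r| := by
    rw [h3, abs_mul]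
    have : |((-1:ℝ)) ^ k| = 1 := by
      rcases Int.even_or_odd k with he | ho
      · rw [he.neg_one_zpow]; simp
      · rw [Odd.neg_one_zpow ho]; simp
    rw [this, one_mul]
  rw [h4]
  rcases le_or_gt 0 r with h5 | h5
  · have := Real.mul_le_sin h5 (by linarith [abs_of_nonneg h5])
    calc 2/Real.pi * |r| = 2/Real.pi * r := by rw [abs_of_nonneg h5]
      _ ≤ Real.sin r := this
      _ ≤ |Real.sin r| := le_abs_self _
  · have hr2 : 0 ≤ -r := by linarith
    have := Real.mul_le_sin hr2 (by rw [abs_of_neg h5] at h2; linarith)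
    calc 2/Real.pi * |r| = 2/Real.pi * (-r) := by rw [abs_of_neg h5]
      _ ≤ Real.sin (-r) := this
      _ = -Real.sin r := Real.sin_neg r
      _ ≤ |Real.sin r| := neg_le_abs _

lemma sinC_re (z : ℂ) : (Complex.sin z).re = Real.sin z.re * Real.cosh z.im := by
  rw [Complex.sin_eq]
  simp [← Complex.ofReal_sin, ← Complex.ofReal_cos, ← Complex.ofReal_sinh, ← Complex.ofReal_cosh]

lemma sinC_im (z : ℂ) : (Complex.sin z).im = Real.cos z.re * Real.sinh z.im := by
  rw [Complex.sin_eq]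
  simp [← Complex.ofReal_sin, ← Complex.ofReal_cos, ← Complex.ofReal_sinh, ← Complex.ofReal_cosh]

lemma cosC_re (z : ℂ) : (Complex.cos z).re = Real.cos z.re * Real.cosh z.im := by
  rw [Complex.cos_eq]
  simp [← Complex.ofReal_sin, ← Complex.ofReal_cos, ← Complex.ofReal_sinh, ← Complex.ofReal_cosh]

lemma cosC_im (z : ℂ) : (Complex.cos z).im = -(Real.sin z.re * Real.sinh z.im) := by
  rw [Complex.cos_eq]
  simp [← Complex.ofReal_sin, ← Complex.ofReal_cos, ← Complex.ofReal_sinh, ← Complex.ofReal_cosh]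

lemma abs_sinC_sq (z : ℂ) :
    (‖Complex.sin z‖)^2 = Real.sin z.re ^ 2 + Real.sinh z.im ^ 2 := by
  rw [Complex.sq_norm, Complex.normSq_apply, sinC_re, sinC_im]
  have h1 := Real.sin_sq_add_cos_sq z.re
  have h2 := Real.cosh_sq z.im
  nlinarith

lemma abs_cosC_sq (z : ℂ) :
    (‖Complex.cos z‖)^2 = Real.cos z.re ^ 2 + Real.sinh z.im ^ 2 := by
  rw [Complex.sq_norm, Complex.normSq_apply, cosC_re, cosC_im]
  have h1 := Real.sin_sq_add_cos_sq z.re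
  have h2 := Real.cosh_sq z.im
  nlinarith

lemma aC_add_bC (ζ : ℂ) : aC ζ + bC ζ = -Complex.cos ζ := by
  rw [aC, bC, Complex.sin_sub, Complex.sin_sub]
  have e1 : (Real.pi : ℂ) / 6 = ((Real.pi / 6 : ℝ) : ℂ) := by push_cast; ring
  have e2 : 5 * (Real.pi : ℂ) / 6 = ((5 * Real.pi / 6 : ℝ) : ℂ) := by push_cast; ring
  rw [e1, e2, ← Complex.ofReal_cos, ← Complex.ofReal_sin, ← Complex.ofReal_cos,
    ← Complex.ofReal_sin]
  have c1 : Real.cos (Real.pi / 6) = Real.sqrt 3 / 2 := Real.cos_pi_div_six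
  have s1 : Real.sin (Real.pi / 6) = 1 / 2 := Real.sin_pi_div_six
  have c2 : Real.cos (5 * Real.pi / 6) = -(Real.sqrt 3 / 2) := by
    rw [show (5 * Real.pi / 6 : ℝ) = Real.pi - Real.pi / 6 by ring, Real.cos_pi_sub, c1]
  have s2 : Real.sin (5 * Real.pi / 6) = 1 / 2 := by
    rw [show (5 * Real.pi / 6 : ℝ) = Real.pi - Real.pi / 6 by ring, Real.sin_pi_sub, s1]
  rw [c1, s1, c2, s2]
  push_cast
  ring

lemma sinh_le_two_mul {x : ℝ} (h0 : 0 ≤ x) (h : x ≤ 1/2) : Real.sinh x ≤ 2 * x := by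
  have h1 : 1 - x ≤ Real.exp (-x) := by
    have := Real.add_one_le_exp (-x)
    linarith
  have h2 : Real.exp x * Real.exp (-x) = 1 := by
    rw [← Real.exp_add]; simp
  have h3 : Real.exp x ≤ 1 / (1 - x) := by
    rw [le_div_iff₀ (by linarith)]
    nlinarith [Real.exp_pos x]
  rw [Real.sinh_eq]
  have h4 : 1 / (1-x) - (1-x) ≤ 4 * x := by
    rw [div_sub' (by linarith : (1:ℝ) - x ≠ 0), div_le_iff₀ (by linarith : (0:ℝ) < 1 - x)]
    nlinarith
  linarith

lemma cosh_le_two {x : ℝ} (h : |x| ≤ 1) : Real.cosh x ≤ 2 := by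
  have h1 : Real.cosh x ≤ Real.cosh 1 := by
    rw [Real.cosh_le_cosh]
    simpa using h
  have h2 : Real.cosh 1 = (Real.exp 1 + Real.exp (-1)) / 2 := Real.cosh_eq 1
  have h3 : Real.exp 1 < 2.7182818286 := Real.exp_one_lt_d9
  have h4 : Real.exp (-1) ≤ 1 := by
    rw [Real.exp_le_one_iff]; norm_num
  linarith


lemma sqrt3_le_two : Real.sqrt 3 ≤ 2 := by
  nlinarith [Real.sq_sqrt (by norm_num : (0:ℝ) ≤ 3), Real.sqrt_nonneg 3]

lemma pos_from_sq (X x s δ : ℝ) (hX0 : 0 ≤ X) (hX2 : X^2 = x^2 + s^2)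
    (hlb : δ ≤ |x|) (hδ : 0 < δ) : 0 < X := by
  nlinarith [sq_abs x, abs_nonneg x, sq_nonneg s]

lemma one_le_pow3 (m : ℕ) : (1:ℝ) ≤ 3 ^ m := one_le_pow₀ (by norm_num)

lemma logpert (x X s η δ : ℝ) (hlb : δ ≤ |x|) (hδpos : 0 < δ) (hX : 0 < X)
    (hX2 : X^2 = x^2 + s^2) (hs : |s| ≤ 2*(η*δ)) (hη : 0 < η) :
    0 ≤ Real.log X - Real.log |x| ∧ Real.log X - Real.log |x| ≤ 2 * η^2 := by
  have hxne : x ≠ 0 := by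
    intro h; rw [h] at hlb; simp at hlb; linarith
  have hx2pos : 0 < x^2 := by positivity
  have hd1 : Real.log (X^2) = 2 * Real.log X := by rw [Real.log_pow]; push_cast; ring
  have hd2 : Real.log (x^2) = 2 * Real.log |x| := by
    rw [Real.log_pow, Real.log_abs]; push_cast; ring
  constructor
  · have : Real.log (x^2) ≤ Real.log (X^2) := by
      apply Real.log_le_log hx2pos
      nlinarith [sq_nonneg s]
    linarith
  · have hratio : Real.log (X^2) - Real.log (x^2) ≤ s^2 / x^2 := by
      have hpos : (0:ℝ) < (x^2 + s^2)/x^2 := by positivity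
      have hlog := Real.log_le_sub_one_of_pos hpos
      rw [Real.log_div (by positivity) (ne_of_gt hx2pos)] at hlog
      have heq : (x^2 + s^2)/x^2 - 1 = s^2/x^2 := by field_simp; ring
      rw [heq] at hlog
      rw [hX2]
      linarith
    have hs2 : s^2 ≤ 4 * η^2 * δ^2 := by
      nlinarith [abs_nonneg s, sq_abs s]
    have hx2 : δ^2 ≤ x^2 := by nlinarith [sq_abs x, abs_nonneg x]
    have hfin : s^2 / x^2 ≤ 4 * η^2 := by
      rw [div_le_iff₀ (by positivity)]
      calc s^2 ≤ 4 * η^2 * δ^2 := hs2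
        _ ≤ 4 * η^2 * x^2 := by nlinarith
    linarith

end helpers

/-- Complexified discrepancy lower bound: for `ζ = θ + iσ` with `θ ∈ [−π/2, 5π/2]`
away from `W` and `|σ| ≤ 3^{−100m}`, and `z` in the rectangle
`[−3^m−1, 3^m+1] × [−3/2, 3/2]`, writing `Z = √3·z`, the discrepancy at `z` is at
least `(c/2)·3^{−40m}`. -/
theorem discrepancy_lower_bound_complex :
    ∃ c > (0 : ℝ), ∃ m₀ : ℕ, ∀ m : ℕ, m₀ ≤ m →
      ∀ ζ : ℂ, ζ.re ∈ Set.Icc (-(Real.pi / 2)) (5 * Real.pi / 2) →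
        (∀ w ∈ Wset, 2 * (3 : ℝ) ^ (-(40 * (m : ℤ))) ≤ |ζ.re - w|) →
        |ζ.im| ≤ (3 : ℝ) ^ (-(100 * (m : ℤ))) →
        ∀ z : ℂ, z.re ∈ Set.Icc (-(3 : ℝ) ^ m - 1) ((3 : ℝ) ^ m + 1) →
          z.im ∈ Set.Icc (-(3 / 2) : ℝ) (3 / 2) →
          (c / 2) * (3 : ℝ) ^ (-(40 * (m : ℤ))) ≤
            max
              |‖Complex.exp (Complex.I * ((Real.sqrt 3 : ℂ) * z) * bC ζ)‖ *
                (‖aC ζ + bC ζ‖ / ‖aC ζ‖) - 1|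
              |‖Complex.exp (-Complex.I * ((Real.sqrt 3 : ℂ) * z) * aC ζ)‖ *
                (‖aC ζ + bC ζ‖ / ‖bC ζ‖) - 1| := by
  refine ⟨1/8, by norm_num, 1, ?_⟩
  intro m hm ζ _hIcc hW hσ z hzre _hzim
  have hpi := Real.pi_pos
  have hpi4 := Real.pi_le_four
  -- power abbreviations
  set δ : ℝ := (3 : ℝ) ^ (-(40 * (m : ℤ))) with hδdef
  set τ : ℝ := (3 : ℝ) ^ (-(100 * (m : ℤ))) with hτdef
  set η : ℝ := (3 : ℝ) ^ (-(60 * (m : ℤ))) with hηdef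
  have h3ne : (3:ℝ) ≠ 0 := by norm_num
  have hδpos : 0 < δ := by positivity
  have hτpos : 0 < τ := by positivity
  have hηpos : 0 < η := by positivity
  have hδ1 : δ ≤ 1 := by
    rw [hδdef, show (1:ℝ) = (3:ℝ)^(0:ℤ) by norm_num]
    exact zpow_le_zpow_right₀ (by norm_num) (by omega)
  have hτη : τ = η * δ := by
    rw [hτdef, hηdef, hδdef, ← zpow_add₀ h3ne]
    congr 1; ring
  have hηsmall : η ≤ ((3:ℝ)^(60:ℕ))⁻¹ := by
    rw [hηdef, ← zpow_natCast (3:ℝ) 60, ← zpow_neg]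
    exact zpow_le_zpow_right₀ (by norm_num) (by omega)
  have hηδ : η ≤ δ := by
    rw [hηdef, hδdef]
    exact zpow_le_zpow_right₀ (by norm_num) (by omega)
  have hmτ : (3:ℝ)^m * τ ≤ ((3:ℝ)^(59:ℕ))⁻¹ * δ := by
    have e : (3:ℝ)^m * τ = (3:ℝ) ^ ((m:ℤ) - 100*m) := by
      rw [hτdef, ← zpow_natCast (3:ℝ) m, ← zpow_add₀ h3ne]
      congr 1 <;> ring
    rw [e, show ((3:ℝ)^(59:ℕ))⁻¹ * δ = (3:ℝ) ^ (-(59:ℤ) + (-(40 * (m:ℤ)))) by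
      rw [zpow_add₀ h3ne, hδdef, ← zpow_natCast (3:ℝ) 59, ← zpow_neg]; norm_num]
    exact zpow_le_zpow_right₀ (by norm_num) (by omega)
  -- real quantities
  set θ : ℝ := ζ.re with hθdef
  set σ : ℝ := ζ.im with hσdef
  set a₀ : ℝ := Real.sin (θ - Real.pi/6) with ha₀def
  set b₀ : ℝ := Real.sin (θ - 5*Real.pi/6) with hb₀def
  set c₀ : ℝ := Real.cos θ with hc₀def
  set s : ℝ := Real.sinh σ with hsdef
  set ch : ℝ := Real.cosh σ with hchdef
  -- basic bounds on σ, s, ch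
  have hτhalf : τ ≤ 1/2 := by
    have h1 : τ ≤ ((3:ℝ)^(1:ℕ))⁻¹ := by
      rw [hτdef, ← zpow_natCast (3:ℝ) 1, ← zpow_neg]
      exact zpow_le_zpow_right₀ (by norm_num) (by omega)
    norm_num at h1
    linarith only [h1]
  have hσhalf : |σ| ≤ 1/2 := le_trans hσ hτhalf
  have hs : |s| ≤ 2 * τ := by
    rw [hsdef, Real.abs_sinh]
    calc Real.sinh |σ| ≤ 2 * |σ| := sinh_le_two_mul (abs_nonneg _) hσhalf
      _ ≤ 2 * τ := by linarith only [hσ]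
  have hch2 : ch ≤ 2 := cosh_le_two (by linarith only [hσhalf])
  have hch1 : 1 ≤ ch := Real.one_le_cosh σ
  have hch0 : 0 ≤ ch := by linarith only [hch1]
  -- lower bounds on a₀ b₀ c₀ via Jordan lemma
  have habs_lb : ∀ t : ℝ, (∀ k : ℤ, 2 * δ ≤ |t - k * Real.pi|) → δ ≤ |Real.sin t| := by
    intro t ht
    obtain ⟨k, hk⟩ := jordan t
    have h1 := ht k
    have h2 : 2 / Real.pi * (2*δ) ≤ 2/Real.pi * |t - k*Real.pi| :=
      mul_le_mul_of_nonneg_left h1 (by positivity)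
    have h3 : δ ≤ 2/Real.pi * (2*δ) := by
      rw [div_mul_eq_mul_div, le_div_iff₀ hpi]
      have h4 : δ * Real.pi ≤ δ * 4 := mul_le_mul_of_nonneg_left hpi4 hδpos.le
      linarith only [h4]
    linarith only [h1, h2, h3, hk]
  have ha₀lb : δ ≤ |a₀| := by
    apply habs_lb
    intro k
    have hw : ((k:ℝ) * Real.pi + Real.pi/6) ∈ Wset := ⟨k, Or.inl rfl⟩
    have h1 := hW _ hw
    rw [show θ - ((k:ℝ)*Real.pi + Real.pi/6) = θ - Real.pi/6 - k*Real.pi by ring] at h1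
    exact h1
  have hb₀lb : δ ≤ |b₀| := by
    apply habs_lb
    intro k
    have hw : ((k:ℝ) * Real.pi + 5*Real.pi/6) ∈ Wset := ⟨k, Or.inr (Or.inr rfl)⟩
    have h1 := hW _ hw
    rw [show θ - ((k:ℝ)*Real.pi + 5*Real.pi/6) = θ - 5*Real.pi/6 - k*Real.pi by ring] at h1
    exact h1
  have hc₀lb : δ ≤ |c₀| := by
    have he : c₀ = Real.sin (θ + Real.pi/2) := (Real.sin_add_pi_div_two θ).symm
    rw [he]
    apply habs_lb
    intro k
    have hw : (((k-1:ℤ):ℝ) * Real.pi + Real.pi/2) ∈ Wset := ⟨k-1, Or.inr (Or.inl rfl)⟩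
    have h1 := hW _ hw
    rw [show θ - (((k-1:ℤ):ℝ)*Real.pi + Real.pi/2) = θ + Real.pi/2 - k*Real.pi by
      push_cast; ring] at h1
    exact h1
  have ha₀ne : a₀ ≠ 0 := abs_pos.mp (lt_of_lt_of_le hδpos ha₀lb)
  have hb₀ne : b₀ ≠ 0 := abs_pos.mp (lt_of_lt_of_le hδpos hb₀lb)
  have hc₀ne : c₀ ≠ 0 := abs_pos.mp (lt_of_lt_of_le hδpos hc₀lb)
  have ha₀ub : |a₀| ≤ 1 := Real.abs_sin_le_one _
  have hb₀ub : |b₀| ≤ 1 := Real.abs_sin_le_one _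
  have hc₀ub : |c₀| ≤ 1 := Real.abs_cos_le_one _
  -- the sum identity
  have hsum : a₀ + b₀ + c₀ = 0 := by
    rw [ha₀def, hb₀def, hc₀def, Real.sin_sub, Real.sin_sub]
    have c1 : Real.cos (Real.pi / 6) = Real.sqrt 3 / 2 := Real.cos_pi_div_six
    have s1 : Real.sin (Real.pi / 6) = 1 / 2 := Real.sin_pi_div_six
    have c2 : Real.cos (5 * Real.pi / 6) = -(Real.sqrt 3 / 2) := by
      rw [show (5 * Real.pi / 6 : ℝ) = Real.pi - Real.pi / 6 by ring, Real.cos_pi_sub, c1]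
    have s2 : Real.sin (5 * Real.pi / 6) = 1 / 2 := by
      rw [show (5 * Real.pi / 6 : ℝ) = Real.pi - Real.pi / 6 by ring, Real.sin_pi_sub, s1]
    rw [c1, s1, c2, s2]
    ring
  -- re/im of aC bC
  have e1 : ζ - (Real.pi:ℂ)/6 = ζ - ((Real.pi/6 : ℝ):ℂ) := by push_cast; ring
  have e2 : ζ - 5*(Real.pi:ℂ)/6 = ζ - ((5*Real.pi/6 : ℝ):ℂ) := by push_cast; ring
  have hare : (aC ζ).re = a₀ * ch := by
    rw [aC, e1, sinC_re]
    simp only [Complex.sub_re, Complex.sub_im, Complex.ofReal_re, Complex.ofReal_im,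
      ha₀def, hchdef, hθdef, hσdef, sub_zero]
  have haim : (aC ζ).im = Real.cos (θ - Real.pi/6) * s := by
    rw [aC, e1, sinC_im]
    simp only [Complex.sub_re, Complex.sub_im, Complex.ofReal_re, Complex.ofReal_im,
      hsdef, hθdef, hσdef, sub_zero]
  have hbre : (bC ζ).re = b₀ * ch := by
    rw [bC, e2, sinC_re]
    simp only [Complex.sub_re, Complex.sub_im, Complex.ofReal_re, Complex.ofReal_im,
      hb₀def, hchdef, hθdef, hσdef, sub_zero]
  have hbim : (bC ζ).im = Real.cos (θ - 5*Real.pi/6) * s := by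
    rw [bC, e2, sinC_im]
    simp only [Complex.sub_re, Complex.sub_im, Complex.ofReal_re, Complex.ofReal_im,
      hsdef, hθdef, hσdef, sub_zero]
  -- abs values
  set A : ℝ := ‖aC ζ‖ with hAdef
  set B : ℝ := ‖bC ζ‖ with hBdef
  set C : ℝ := ‖aC ζ + bC ζ‖ with hCdef
  have hA2 : A^2 = a₀^2 + s^2 := by
    rw [hAdef, aC, e1, abs_sinC_sq]
    simp only [Complex.sub_re, Complex.sub_im, Complex.ofReal_re, Complex.ofReal_im,
      ha₀def, hsdef, hθdef, hσdef, sub_zero]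
  have hB2 : B^2 = b₀^2 + s^2 := by
    rw [hBdef, bC, e2, abs_sinC_sq]
    simp only [Complex.sub_re, Complex.sub_im, Complex.ofReal_re, Complex.ofReal_im,
      hb₀def, hsdef, hθdef, hσdef, sub_zero]
  have hC2 : C^2 = c₀^2 + s^2 := by
    have he : C = ‖Complex.cos ζ‖ := by
      rw [hCdef, aC_add_bC]; simp
    rw [he, abs_cosC_sq]
  have hApos : 0 < A := pos_from_sq A a₀ s δ (norm_nonneg _) hA2 ha₀lb hδpos
  have hBpos : 0 < B := pos_from_sq B b₀ s δ (norm_nonneg _) hB2 hb₀lb hδpos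
  have hCpos : 0 < C := pos_from_sq C c₀ s δ (norm_nonneg _) hC2 hc₀lb hδpos
  -- log perturbation bounds
  have hsηδ : |s| ≤ 2 * (η * δ) := by rw [← hτη]; exact hs
  obtain ⟨hdA0, hdA1⟩ := logpert a₀ A s η δ ha₀lb hδpos hApos hA2 hsηδ hηpos
  obtain ⟨hdB0, hdB1⟩ := logpert b₀ B s η δ hb₀lb hδpos hBpos hB2 hsηδ hηpos
  obtain ⟨hdC0, hdC1⟩ := logpert c₀ C s η δ hc₀lb hδpos hCpos hC2 hsηδ hηpos
  -- K and G
  set G : ℝ := a₀ * Real.log |a₀| + b₀ * Real.log |b₀| + c₀ * Real.log |c₀| with hGdef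
  set K : ℝ := a₀ * Real.log A + b₀ * Real.log B + c₀ * Real.log C with hKdef
  have hlog2pos : (0:ℝ) < Real.log 2 := Real.log_pos (by norm_num)
  have hGlb : Real.log 2 * δ ≤ |G| := by
    have h1 := ent_three hsum ha₀ne hb₀ne hc₀ne
    have h2 : δ ≤ min |a₀| (min |b₀| |c₀|) := le_min ha₀lb (le_min hb₀lb hc₀lb)
    calc Real.log 2 * δ ≤ Real.log 2 * min |a₀| (min |b₀| |c₀|) :=
          mul_le_mul_of_nonneg_left h2 hlog2pos.le
      _ ≤ |G| := h1
  have hKG : |K - G| ≤ 6 * η^2 := by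
    have he : K - G = a₀ * (Real.log A - Real.log |a₀|) + b₀ * (Real.log B - Real.log |b₀|)
        + c₀ * (Real.log C - Real.log |c₀|) := by rw [hKdef, hGdef]; ring
    rw [he]
    have t1 : |a₀ * (Real.log A - Real.log |a₀|)| ≤ 2 * η^2 := by
      rw [abs_mul, abs_of_nonneg hdA0]
      calc |a₀| * (Real.log A - Real.log |a₀|) ≤ 1 * (2 * η^2) :=
            mul_le_mul ha₀ub hdA1 hdA0 zero_le_one
        _ = 2 * η^2 := one_mul _
    have t2 : |b₀ * (Real.log B - Real.log |b₀|)| ≤ 2 * η^2 := by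
      rw [abs_mul, abs_of_nonneg hdB0]
      calc |b₀| * (Real.log B - Real.log |b₀|) ≤ 1 * (2 * η^2) :=
            mul_le_mul hb₀ub hdB1 hdB0 zero_le_one
        _ = 2 * η^2 := one_mul _
    have t3 : |c₀ * (Real.log C - Real.log |c₀|)| ≤ 2 * η^2 := by
      rw [abs_mul, abs_of_nonneg hdC0]
      calc |c₀| * (Real.log C - Real.log |c₀|) ≤ 1 * (2 * η^2) :=
            mul_le_mul hc₀ub hdC1 hdC0 zero_le_one
        _ = 2 * η^2 := one_mul _
    have u1 := abs_add_le (a₀ * (Real.log A - Real.log |a₀|)) (b₀ * (Real.log B - Real.log |b₀|))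
    have u2 := abs_add_le (a₀ * (Real.log A - Real.log |a₀|) + b₀ * (Real.log B - Real.log |b₀|))
      (c₀ * (Real.log C - Real.log |c₀|))
    linarith only [t1, t2, t3, u1, u2]
  have hKlb : Real.log 2 * δ - 6 * η^2 ≤ |K| := by
    have h1 := abs_sub_abs_le_abs_sub G K
    rw [abs_sub_comm G K] at h1
    linarith only [h1, hKG, hGlb]
  -- Z
  set Zc : ℂ := ((Real.sqrt 3 : ℝ) : ℂ) * z with hZdef
  have hZre : Zc.re = Real.sqrt 3 * z.re := by rw [hZdef]; simp
  have hZreb : |Zc.re| ≤ 4 * (3:ℝ)^m := by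
    rw [hZre, abs_mul, abs_of_nonneg (Real.sqrt_nonneg 3)]
    have h2 : |z.re| ≤ (3:ℝ)^m + 1 := by
      rw [abs_le]; exact ⟨by linarith only [hzre.1], hzre.2⟩
    have h3 := one_le_pow3 m
    calc Real.sqrt 3 * |z.re| ≤ 2 * ((3:ℝ)^m + 1) :=
          mul_le_mul sqrt3_le_two h2 (abs_nonneg _) (by norm_num)
      _ ≤ 4 * (3:ℝ)^m := by linarith only [h3]
  -- P and Q
  set P : ℝ := -(Zc * bC ζ).im + Real.log C - Real.log A with hPdef
  set Q : ℝ := (Zc * aC ζ).im + Real.log C - Real.log B with hQdef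
  -- the key identity
  have htrig : a₀ * Real.cos (θ - 5*Real.pi/6) - b₀ * Real.cos (θ - Real.pi/6)
      = Real.sin (2*Real.pi/3) := by
    have hd : Real.sin ((θ - Real.pi/6) - (θ - 5*Real.pi/6))
        = a₀ * Real.cos (θ - 5*Real.pi/6) - b₀ * Real.cos (θ - Real.pi/6) := by
      rw [Real.sin_sub, ha₀def, hb₀def]; ring
    rw [← hd]
    congr 1
    ring
  have hid : (a₀ * ch) * P + (b₀ * ch) * Q
      = -(Zc.re * (ch * s * Real.sin (2*Real.pi/3))) - ch * K := by
    rw [hPdef, hQdef,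
      show (Zc * bC ζ).im = Zc.re * (bC ζ).im + Zc.im * (bC ζ).re from Complex.mul_im _ _,
      show (Zc * aC ζ).im = Zc.re * (aC ζ).im + Zc.im * (aC ζ).re from Complex.mul_im _ _,
      hare, haim, hbre, hbim, hKdef]
    linear_combination (-(Zc.re * ch * s)) * htrig + (ch * Real.log C) * hsum
  -- lower bound on the combination
  have hE : |Zc.re * (ch * s * Real.sin (2*Real.pi/3))| ≤ 16 * ((3:ℝ)^m * τ) := by
    have hb1 : |ch * s * Real.sin (2*Real.pi/3)| = ch * |s| * |Real.sin (2*Real.pi/3)| := by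
      rw [abs_mul, abs_mul, abs_of_nonneg hch0]
    have hb2 : ch * |s| * |Real.sin (2*Real.pi/3)| ≤ ch * |s| * 1 :=
      mul_le_mul_of_nonneg_left (Real.abs_sin_le_one _) (by positivity)
    have hb3 : ch * |s| ≤ 2 * (2 * τ) := mul_le_mul hch2 hs (abs_nonneg _) (by norm_num)
    have hb4 : |Zc.re * (ch * s * Real.sin (2*Real.pi/3))|
        = |Zc.re| * |ch * s * Real.sin (2*Real.pi/3)| := abs_mul _ _
    have hb5 : |Zc.re| * |ch * s * Real.sin (2*Real.pi/3)| ≤ (4 * (3:ℝ)^m) * (4 * τ) := by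
      apply mul_le_mul hZreb _ (abs_nonneg _) (by positivity)
      rw [hb1]
      calc ch * |s| * |Real.sin (2*Real.pi/3)| ≤ ch * |s| * 1 := hb2
        _ = ch * |s| := mul_one _
        _ ≤ 2 * (2 * τ) := hb3
        _ = 4 * τ := by ring
    rw [hb4]
    calc |Zc.re| * |ch * s * Real.sin (2*Real.pi/3)| ≤ (4 * (3:ℝ)^m) * (4 * τ) := hb5
      _ = 16 * ((3:ℝ)^m * τ) := by ring
  have hcomblb : Real.log 2 * δ - 6*η^2 - 16 * ((3:ℝ)^m * τ)
      ≤ |(a₀*ch)*P + (b₀*ch)*Q| := by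
    rw [hid]
    have he2 : -(Zc.re * (ch * s * Real.sin (2*Real.pi/3))) - ch * K
        = -(ch * K + Zc.re * (ch * s * Real.sin (2*Real.pi/3))) := by ring
    rw [he2, abs_neg]
    have h1 := abs_sub_abs_le_abs_sub (ch * K) (-(Zc.re * (ch * s * Real.sin (2*Real.pi/3))))
    rw [sub_neg_eq_add, abs_neg] at h1
    have h2 : |ch * K| = ch * |K| := by rw [abs_mul, abs_of_nonneg hch0]
    have h3 : |K| ≤ ch * |K| := le_mul_of_one_le_left (abs_nonneg K) hch1
    rw [h2] at h1
    linarith only [h1, h3, hE, hKlb]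
  -- numeric bound : δ/2 ≤ the combination lower bound
  have hnum : δ/2 ≤ Real.log 2 * δ - 6*η^2 - 16 * ((3:ℝ)^m * τ) := by
    have n1 : η * η ≤ ((3:ℝ)^(60:ℕ))⁻¹ * δ :=
      mul_le_mul hηsmall hηδ hηpos.le (by positivity)
    have n2 : ((3:ℝ)^(60:ℕ))⁻¹ * δ ≤ ((3:ℝ)^(59:ℕ))⁻¹ * δ :=
      mul_le_mul_of_nonneg_right (by norm_num) hδpos.le
    have n3 : (22:ℝ) * (((3:ℝ)^(59:ℕ))⁻¹ * δ) ≤ (1/10) * δ := by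
      rw [show (22:ℝ) * (((3:ℝ)^(59:ℕ))⁻¹ * δ) = (22 * ((3:ℝ)^(59:ℕ))⁻¹) * δ by ring]
      exact mul_le_mul_of_nonneg_right (by norm_num) hδpos.le
    have n4 : (3/5 : ℝ) * δ ≤ Real.log 2 * δ := by
      have := Real.log_two_gt_d9
      exact mul_le_mul_of_nonneg_right (by linarith only [this]) hδpos.le
    have n5 : η^2 = η * η := sq η
    linarith only [n1, n2, n3, n4, hmτ, n5, hδpos]
  -- bound on coefficients
  have hαb : |a₀ * ch| ≤ 2 := by
    rw [abs_mul, abs_of_nonneg hch0]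
    calc |a₀| * ch ≤ 1 * 2 := mul_le_mul ha₀ub hch2 hch0 zero_le_one
      _ = 2 := one_mul 2
  have hβb : |b₀ * ch| ≤ 2 := by
    rw [abs_mul, abs_of_nonneg hch0]
    calc |b₀| * ch ≤ 1 * 2 := mul_le_mul hb₀ub hch2 hch0 zero_le_one
      _ = 2 := one_mul 2
  have hmaxPQ : δ/2 ≤ 4 * max |P| |Q| := by
    have h1 := abs_add_le ((a₀*ch)*P) ((b₀*ch)*Q)
    have h2 : |(a₀*ch)*P| ≤ 2 * max |P| |Q| := by
      rw [abs_mul]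
      exact mul_le_mul hαb (le_max_left _ _) (abs_nonneg _) (by norm_num)
    have h3 : |(b₀*ch)*Q| ≤ 2 * max |P| |Q| := by
      rw [abs_mul]
      exact mul_le_mul hβb (le_max_right _ _) (abs_nonneg _) (by norm_num)
    linarith only [h1, h2, h3, hcomblb, hnum]
  -- exponential representations
  have hXP : ‖Complex.exp (Complex.I * Zc * bC ζ)‖ * (C / A) = Real.exp P := by
    rw [Complex.norm_exp]
    have hre : (Complex.I * Zc * bC ζ).re = -(Zc * bC ζ).im := by
      rw [mul_assoc]; simp
    rw [hre, hPdef, show -(Zc * bC ζ).im + Real.log C - Real.log A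
      = -(Zc * bC ζ).im + (Real.log C - Real.log A) by ring,
      Real.exp_add, Real.exp_sub, Real.exp_log hCpos, Real.exp_log hApos]
  have hYQ : ‖Complex.exp (-Complex.I * Zc * aC ζ)‖ * (C / B) = Real.exp Q := by
    rw [Complex.norm_exp]
    have hre : (-Complex.I * Zc * aC ζ).re = (Zc * aC ζ).im := by
      rw [mul_assoc]; simp
    rw [hre, hQdef, show (Zc * aC ζ).im + Real.log C - Real.log B
      = (Zc * aC ζ).im + (Real.log C - Real.log B) by ring,
      Real.exp_add, Real.exp_sub, Real.exp_log hCpos, Real.exp_log hBpos]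
  -- conclusion
  rw [show ((1:ℝ)/8/2) = 1/16 by norm_num]
  by_contra hcon
  push_neg at hcon
  rw [max_lt_iff] at hcon
  obtain ⟨hX, hY⟩ := hcon
  rw [hXP] at hX
  rw [hYQ] at hY
  have hδ16 : (1/16) * δ ≤ 1/16 := by linarith only [hδ1]
  have hexpP := abs_lt.mp (lt_of_lt_of_le hX hδ16)
  have hexpQ := abs_lt.mp (lt_of_lt_of_le hY hδ16)
  have hPb : |P| < δ/8 := by
    have hc := log_close (x := Real.exp P) (by linarith only [hexpP.1]) (by linarith only [hexpP.2])
    rw [Real.log_exp] at hc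
    have : |Real.exp P - 1| < (1/16) * δ := hX
    linarith only [hc, hX]
  have hQb : |Q| < δ/8 := by
    have hc := log_close (x := Real.exp Q) (by linarith only [hexpQ.1]) (by linarith only [hexpQ.2])
    rw [Real.log_exp] at hc
    linarith only [hc, hY]
  have hmax2 : max |P| |Q| < δ/8 := max_lt hPb hQb
  linarith only [hmaxPQ, hmax2, hδpos]
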